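/- arXiv:0904.0846 — 3 statements merged into one kernel-verified Lean document; each statement's English description precedes it below -/
import Mathlib

section
/- Let n and s be coprime integers with 1 < n < s, and let S be the additive submonoid of ℕ generated by n and s. Then the set of gaps ℕ \ S is finite and has exactly (n−1)(s−1)/2 elements. -/
private lemma nsaux_prod (n s : ℕ) (h1 : 1 < n) (h2 : n < s) :
    (n-1)*(s-1) = n*s - n - s + 1 ∧ n + s ≤ n*s := by
  obtain ⟨a, rfl⟩ : ∃ a, n = a + 1 := ⟨n-1, by omega⟩
  obtain ⟨b, rfl⟩ : ∃ b, s = b + 1 := ⟨s-1, by omega⟩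
  have h : (a+1)*(b+1) = a*b + a + b + 1 := by ring
  have h2' : 1*2 ≤ a*b := Nat.mul_le_mul (by omega) (by omega)
  simp only [Nat.add_sub_cancel]
  rw [h]
  generalize a*b = p at h2' ⊢
  omega

private lemma nsaux_mem (n s k : ℕ) (hn : 0 < n) :
    k ∈ AddSubmonoid.closure ({n, s} : Set ℕ) ↔ ∃ a c, c < n ∧ a * n + c * s = k := by
  rw [AddSubmonoid.mem_closure_pair]
  constructor
  · rintro ⟨a, b, rfl⟩
    refine ⟨a + b / n * s, b % n, Nat.mod_lt _ hn, ?_⟩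
    simp only [smul_eq_mul]
    conv_rhs => rw [← Nat.div_add_mod b n]
    ring
  · rintro ⟨a, c, _, rfl⟩
    exact ⟨a, c, by simp [smul_eq_mul]⟩

private lemma nsaux_key (n s : ℕ) (h1 : 1 < n) (hcop : Nat.Coprime n s) (k : ℕ) :
    ∃ b, b < n ∧ b * s % n = k % n ∧
      (k ∈ AddSubmonoid.closure ({n, s} : Set ℕ) ↔ b * s ≤ k) ∧
      (∀ c, c < n → c * s % n = k % n → c = b) := by
  haveI : NeZero n := ⟨by omega⟩
  have hu : IsUnit (s : ZMod n) := (ZMod.isUnit_iff_coprime s n).mpr hcop.symm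
  set b := ((k : ZMod n) * (s : ZMod n)⁻¹).val with hb
  have hblt : b < n := ZMod.val_lt _
  have hcast : ((b * s : ℕ) : ZMod n) = (k : ZMod n) := by
    push_cast
    rw [hb, ZMod.natCast_val, ZMod.cast_id, mul_assoc, ZMod.inv_mul_of_unit _ hu, mul_one]
  have hmod : b * s % n = k % n := (ZMod.natCast_eq_natCast_iff _ _ _).mp hcast
  have huniq : ∀ c, c < n → c * s % n = k % n → c = b := by
    intro c hc hcm
    have h1' : ((c * s : ℕ) : ZMod n) = ((b * s : ℕ) : ZMod n) := by
      rw [hcast]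
      exact (ZMod.natCast_eq_natCast_iff _ _ _).mpr hcm
    push_cast at h1'
    have h2' : (c : ZMod n) = (b : ZMod n) := by
      have := congrArg (· * (s : ZMod n)⁻¹) h1'
      simpa [mul_assoc, ZMod.mul_inv_of_unit _ hu] using this
    have := congrArg ZMod.val h2'
    rwa [ZMod.val_cast_of_lt hc, ZMod.val_cast_of_lt hblt] at this
  refine ⟨b, hblt, hmod, ?_, huniq⟩
  constructor
  · intro hk
    obtain ⟨a, c, hc, rfl⟩ := (nsaux_mem n s _ (by omega)).mp hk
    have : c * s % n = (a * n + c * s) % n := by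
      rw [add_comm, mul_comm a n, Nat.add_mul_mod_self_left]
    have hcb := huniq c hc this
    rw [← hcb]
    exact Nat.le_add_left _ _
  · intro hle
    have hd : (n : ℤ) ∣ (k : ℤ) - (b * s : ℕ) := Nat.modEq_iff_dvd.mp hmod
    obtain ⟨m, hm⟩ := hd
    refine (nsaux_mem n s _ (by omega)).mpr ⟨m.toNat, b, hblt, ?_⟩
    have hn0 : (0:ℤ) < n := by exact_mod_cast (by omega : 0 < n)
    have hk0 : (0:ℤ) ≤ (n:ℤ) * m := by
      rw [← hm]
      push_cast
      have : ((b:ℤ) * s) ≤ (k:ℤ) := by exact_mod_cast hle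
      linarith
    have hm0 : 0 ≤ m := by nlinarith
    zify
    rw [Int.toNat_of_nonneg hm0]
    push_cast at hm
    linear_combination -hm

set_option maxHeartbeats 1000000 in
private lemma nsaux_sym (n s : ℕ) (h1 : 1 < n) (h2 : n < s) (hcop : Nat.Coprime n s)
    (k : ℕ) (hk : k ≤ n*s - n - s) :
    (k ∉ AddSubmonoid.closure ({n,s} : Set ℕ)) ↔
      (n*s - n - s - k) ∈ AddSubmonoid.closure ({n,s} : Set ℕ) := by
  obtain ⟨hprod, hns⟩ := nsaux_prod n s h1 h2
  obtain ⟨b, hb, hbm, hbi, hbu⟩ := nsaux_key n s h1 hcop k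
  obtain ⟨b', hb', hbm', hbi', hbu'⟩ := nsaux_key n s h1 hcop (n*s - n - s - k)
  have hn0 : (0:ℤ) < n := by exact_mod_cast (by omega : 0 < n)
  have hd : (n : ℤ) ∣ (k : ℤ) - (b * s : ℕ) := Nat.modEq_iff_dvd.mp hbm
  obtain ⟨m, hm⟩ := hd
  push_cast at hm
  -- cast facts
  have hc1 : ((n*s - n - s - k : ℕ) : ℤ) = (n:ℤ)*s - n - s - k := by
    zify [show n ≤ n*s by omega, show s ≤ n*s - n by omega, hk]
  have hc2 : ((n - 1 - b : ℕ) : ℤ) = (n:ℤ) - 1 - b := by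
    zify [show (1:ℕ) ≤ n by omega, show b ≤ n - 1 by omega]
  -- the residue of the mirror
  have hmod' : (n - 1 - b) * s % n = (n*s - n - s - k) % n := by
    apply Nat.modEq_iff_dvd.mpr
    push_cast [hc1, hc2]
    exact ⟨-1 - m, by linear_combination -hm⟩
  have hq : n - 1 - b = b' := hbu' _ (by omega) hmod'
  rw [hbi, hbi', ← hq]
  -- now pure arithmetic: ¬ b*s ≤ k ↔ (n-1-b)*s ≤ n*s-n-s-k
  have key : ∀ x y : ℕ, ((x:ℤ) ≤ y) → x ≤ y := fun x y h => by exact_mod_cast h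
  constructor
  · intro hlt
    push_neg at hlt
    have hltZ : (k:ℤ) < (b:ℤ)*s := by exact_mod_cast hlt
    have hmneg : m < 0 := by
      by_contra hcon'
      push_neg at hcon'
      have := mul_nonneg hn0.le hcon'
      linarith
    have hstep : (k:ℤ) + n ≤ (b:ℤ)*s := by
      have h3 : (n:ℤ)*m ≤ (n:ℤ)*(-1) := mul_le_mul_of_nonneg_left (by omega) hn0.le
      linarith
    apply key
    rw [Nat.cast_mul, hc1, hc2]
    linarith [show ((n:ℤ)-1-(b:ℤ))*(s:ℤ) = (n:ℤ)*s - s - (b:ℤ)*s by ring]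
  · intro hle hcon
    have hleZ : (((n-1-b)*s:ℕ):ℤ) ≤ ((n*s-n-s-k:ℕ):ℤ) := Nat.cast_le.mpr hle
    rw [Nat.cast_mul, hc1, hc2] at hleZ
    have hconZ : (b:ℤ)*s ≤ (k:ℤ) := by exact_mod_cast hcon
    linarith [show ((n:ℤ)-1-(b:ℤ))*(s:ℤ) = (n:ℤ)*s - s - (b:ℤ)*s by ring]

/-- For coprime `n, s` with `1 < n < s`, the set of gaps
`ℕ \ S`, where `S` is the additive submonoid of `ℕ` generated by `n` and `s`,
is finite and has exactly `(n-1)(s-1)/2` elements. -/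
theorem nsCurve_gaps_finite_card (n s : ℕ) (h1 : 1 < n) (h2 : n < s)
    (hcop : Nat.Coprime n s) :
    {k : ℕ | k ∉ AddSubmonoid.closure ({n, s} : Set ℕ)}.Finite ∧
    {k : ℕ | k ∉ AddSubmonoid.closure ({n, s} : Set ℕ)}.ncard = (n - 1) * (s - 1) / 2 := by
  classical
  obtain ⟨hprod, hns⟩ := nsaux_prod n s h1 h2
  set F := n*s - n - s with hF
  have hub : ∀ k, k ∉ AddSubmonoid.closure ({n,s} : Set ℕ) → k ≤ F := fun k hk =>
    (frobeniusNumber_pair hcop h1 (h1.trans h2)).2 hk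
  set A : Finset ℕ :=
    (Finset.range (F+1)).filter (fun k => k ∉ AddSubmonoid.closure ({n,s} : Set ℕ)) with hA
  have hset : {k : ℕ | k ∉ AddSubmonoid.closure ({n,s} : Set ℕ)} = ↑A := by
    ext k
    simp only [hA, Finset.coe_filter, Finset.mem_range, Set.mem_setOf_eq, Nat.lt_succ_iff]
    exact ⟨fun h => ⟨hub k h, h⟩, fun h => h.2⟩
  rw [hset]
  refine ⟨A.finite_toSet, ?_⟩
  rw [Set.ncard_coe_finset]
  set B : Finset ℕ :=
    (Finset.range (F+1)).filter (fun k => k ∈ AddSubmonoid.closure ({n,s} : Set ℕ)) with hB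
  have hcards : A.card = B.card := by
    apply Finset.card_bij (fun k _ => F - k)
    · intro k hk
      simp only [hA, Finset.mem_filter, Finset.mem_range, Nat.lt_succ_iff] at hk
      simp only [hB, Finset.mem_filter, Finset.mem_range, Nat.lt_succ_iff]
      exact ⟨by omega, (nsaux_sym n s h1 h2 hcop k hk.1).mp hk.2⟩
    · intro a ha b hb hab
      simp only [hA, Finset.mem_filter, Finset.mem_range, Nat.lt_succ_iff] at ha hb
      omega
    · intro c hc
      simp only [hB, Finset.mem_filter, Finset.mem_range, Nat.lt_succ_iff] at hc
      refine ⟨F - c, ?_, by omega⟩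
      simp only [hA, Finset.mem_filter, Finset.mem_range, Nat.lt_succ_iff]
      refine ⟨by omega, (nsaux_sym n s h1 h2 hcop (F-c) (by omega)).mpr ?_⟩
      rw [show F - (F - c) = c by omega]
      exact hc.2
  have hsum : B.card + A.card = F + 1 := by
    have := Finset.card_filter_add_card_filter_not (s := Finset.range (F+1))
      (p := fun k => k ∈ AddSubmonoid.closure ({n,s} : Set ℕ))
    simpa [hA, hB] using this
  rw [hprod]
  omega
end

section
/- Let n and s be coprime integers with 1 < n < s, let S be the additive submonoid of ℕ generated by n and s, and set g = (n−1)(s−1)/2. Then for every integer k with 0 ≤ k ≤ 2g−1, one has k ∈ S if and only if 2g−1−k ∉ S. -/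
private lemma ns_mem_iff (n s : ℕ) (m : ℕ) :
    m ∈ AddSubmonoid.closure ({n, s} : Set ℕ) ↔ ∃ a b : ℕ, m = a * n + b * s := by
  rw [AddSubmonoid.mem_closure_pair]
  constructor
  · rintro ⟨a, b, h⟩; exact ⟨a, b, by simp [smul_eq_mul] at h; omega⟩
  · rintro ⟨a, b, h⟩; exact ⟨a, b, by simp [smul_eq_mul]; omega⟩

private lemma ns_rep (n s : ℕ) (hs : 0 < s) (hcop : Nat.Coprime n s) (k : ℤ) :
    ∃ a b : ℤ, 0 ≤ a ∧ a < (s : ℤ) ∧ k = a * n + b * s := by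
  have hcz : IsCoprime (n : ℤ) (s : ℤ) := by
    rw [Int.isCoprime_iff_gcd_eq_one, Int.gcd_natCast_natCast]; exact hcop
  obtain ⟨u, v, huv⟩ := hcz
  set a : ℤ := (k * u) % (s : ℤ) with ha
  have hs' : (0 : ℤ) < s := by exact_mod_cast hs
  refine ⟨a, (k * u) / s * n + k * v, Int.emod_nonneg _ (by omega), Int.emod_lt_of_pos _ hs', ?_⟩
  have hdiv : k * u = (s : ℤ) * ((k * u) / s) + a := (Int.mul_ediv_add_emod _ _).symm
  have ha' : a = k * u - (s : ℤ) * ((k * u) / s) := by omega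
  rw [ha']
  linear_combination (-k) * huv

private lemma ns_mem_iff_b (n s : ℕ) (hs : 0 < s) (hcop : Nat.Coprime n s)
    (k : ℕ) (a b : ℤ) (ha0 : 0 ≤ a) (has : a < (s : ℤ))
    (hk : (k : ℤ) = a * n + b * s) :
    k ∈ AddSubmonoid.closure ({n, s} : Set ℕ) ↔ 0 ≤ b := by
  rw [ns_mem_iff]
  constructor
  · rintro ⟨a', b', h⟩
    have h' : (a' : ℤ) * n + b' * s = a * n + b * s := by
      rw [← hk]; exact_mod_cast h.symm
    have hcz : IsCoprime (s : ℤ) (n : ℤ) := by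
      rw [Int.isCoprime_iff_gcd_eq_one, Int.gcd_natCast_natCast]; exact hcop.symm
    have hdvd : (s : ℤ) ∣ ((a' : ℤ) - a) * n := ⟨b - b', by ring_nf; linarith [h']⟩
    obtain ⟨t, ht⟩ := hcz.dvd_of_dvd_mul_right hdvd
    have ht0 : 0 ≤ t := by nlinarith [Int.natCast_nonneg a', has, ha0]
    have hb : b = t * n + b' := by
      have hs' : (0 : ℤ) < s := by exact_mod_cast hs
      have : (a' : ℤ) = a + s * t := by linarith [ht]
      nlinarith [h', this]
    have : (0:ℤ) ≤ n := Int.natCast_nonneg n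
    nlinarith [Int.natCast_nonneg b']
  · intro hb
    refine ⟨a.toNat, b.toNat, ?_⟩
    have : (k : ℤ) = (a.toNat : ℤ) * n + (b.toNat : ℤ) * s := by
      rw [Int.toNat_of_nonneg ha0, Int.toNat_of_nonneg hb]; exact hk
    exact_mod_cast this

/-- For coprime `n, s` with `1 < n < s`, `S` the additive submonoid
of `ℕ` generated by `n` and `s`, and `g = (n-1)(s-1)/2`: for every `k` with
`0 ≤ k ≤ 2g - 1`, one has `k ∈ S` if and only if `2g - 1 - k ∉ S`. -/
theorem nsCurve_semigroup_symmetry (n s g : ℕ) (h1 : 1 < n) (h2 : n < s)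
    (hcop : Nat.Coprime n s) (hg : g = (n - 1) * (s - 1) / 2) :
    ∀ k : ℕ, k ≤ 2 * g - 1 →
      (k ∈ AddSubmonoid.closure ({n, s} : Set ℕ) ↔
        (2 * g - 1 - k) ∉ AddSubmonoid.closure ({n, s} : Set ℕ)) := by
  have hs : 0 < s := by omega
  -- (n-1)(s-1) is even
  have heven : 2 ∣ (n - 1) * (s - 1) := by
    rcases Nat.even_or_odd n with he | ho
    · have : ¬ (2 ∣ s) := by
        intro h; obtain ⟨x, hx⟩ := he
        have := Nat.Coprime.eq_one_of_dvd (hcop.coprime_dvd_left ⟨x, by omega⟩) h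
        omega
      have : s % 2 = 1 := by omega
      exact Dvd.dvd.mul_left ⟨(s-1)/2, by omega⟩ _
    · obtain ⟨m, hm⟩ := ho
      exact Dvd.dvd.mul_right ⟨m, by omega⟩ _
  have hns : n + s < n * s := by nlinarith
  have hkey : (n - 1) * (s - 1) + n + s = n * s + 1 := by
    zify [Nat.le_of_lt h1, hs]
    ring
  have hF : 2 * g - 1 = n * s - n - s := by
    obtain ⟨c, hc⟩ := heven
    omega
  intro k hk
  have hFz : ((2 * g - 1 : ℕ) : ℤ) = (n : ℤ) * s - n - s := by
    rw [hF, Nat.cast_sub (by omega), Nat.cast_sub (by omega)]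
    push_cast; ring
  obtain ⟨a, b, ha0, has, hab⟩ := ns_rep n s hs hcop (k : ℤ)
  have hk' : k ∈ AddSubmonoid.closure ({n, s} : Set ℕ) ↔ 0 ≤ b :=
    ns_mem_iff_b n s hs hcop k a b ha0 has hab
  have hcompl : ((2 * g - 1 - k : ℕ) : ℤ) = ((s:ℤ) - 1 - a) * n + (-1 - b) * s := by
    rw [Nat.cast_sub hk, hFz, hab]; ring
  have hc' : (2 * g - 1 - k) ∈ AddSubmonoid.closure ({n, s} : Set ℕ) ↔ 0 ≤ -1 - b :=
    ns_mem_iff_b n s hs hcop _ _ _ (by omega) (by omega) hcompl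
  rw [hk', hc']
  omega
end

section
/- Let n and s be coprime integers with 1 < n < s, let S be the additive submonoid of ℕ generated by n and s, set g = (n−1)(s−1)/2, and let w_1* < w_2* < ... be the increasing enumeration of S (so w_1* = 0). Then for every index i ≥ g+1, the i-th smallest element of S equals g − 1 + i. -/
/-!
For `F = n * s - n - s`, the Frobenius number, exactly one of `x` and `F - x` lies in `S` for
`0 ≤ x ≤ F`: if `x ∉ S`, write `x = a * n - b * s` with `0 ≤ a < s` and `b ≥ 1`, so that
`F - x = (s - 1 - a) * n + (b - 1) * s`; and both cannot lie in `S` since `F ∉ S`. Hence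
`[0, F]` is split evenly between `S` and its complement, so it contains `(F + 1) / 2 = g`
nongaps, and every integer beyond `F` lies in `S`. So `g - 1 + i` is the `i`-th nongap.
-/

open Finset

namespace Nat

variable {p : ℕ → Prop} [DecidablePred p]

theorem two_mul_count_eq_of_iff_not_sub {F : ℕ} (h : ∀ x ≤ F, p x ↔ ¬p (F - x)) :
    2 * count p (F + 1) = F + 1 := by
  have hreflect : #{x ∈ range (F + 1) | p x} = #{x ∈ range (F + 1) | ¬p x} := by
    refine card_nbij' (F - ·) (F - ·) ?_ ?_ ?_ ?_ <;> intro x hx <;>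
      simp only [coe_filter, mem_range, Set.mem_ofPred_eq] at hx ⊢
    · exact ⟨by omega, (h x (by omega)).1 hx.2⟩
    · refine ⟨by omega, (h (F - x) (by omega)).2 ?_⟩
      rw [Nat.sub_sub_self (by omega)]
      exact hx.2
    · omega
    · omega
  have hsplit := card_filter_add_card_filter_not (s := range (F + 1)) (p ·)
  rw [card_range] at hsplit
  rw [count_eq_card_filter_range]
  omega

theorem nth_eq_add_of_count_add_eq {F g i : ℕ} (hF : ∀ k, F < k → p k)
    (hg : count p (F + 1) + g = F + 1) (hi : F < i + g) : nth p i = i + g := by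
  have hcount : count p (i + g) = i := by
    rw [← Nat.add_sub_of_le (show F + 1 ≤ i + g by omega), count_add,
      count_of_forall (p := fun k => p (F + 1 + k)) fun k _ => hF _ (by omega)]
    omega
  simpa [hcount] using nth_count (hF _ hi)

end Nat

open Nat

theorem sub_mem_closure_pair_of_notMem {m n x : ℕ} (cop : Coprime m n) (hn : n ≠ 0)
    (hx : x ∉ AddSubmonoid.closure {m, n}) :
    m * n - m - n - x ∈ AddSubmonoid.closure {m, n} := by
  simp only [AddSubmonoid.mem_closure_pair, smul_eq_mul] at hx ⊢
  obtain ⟨a, ha, hmod⟩ := exists_mul_mod_eq_of_coprime x cop hn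
  have hlt : x < m * a := by
    by_contra! hle
    obtain ⟨b, hb⟩ : n ∣ x - m * a := dvd_of_mod_eq_zero (sub_mod_eq_zero_of_mod_eq hmod.symm)
    exact hx ⟨a, b, by rw [mul_comm a, mul_comm b, ← hb]; omega⟩
  obtain ⟨b, hb⟩ : n ∣ m * a - x := dvd_of_mod_eq_zero (sub_mod_eq_zero_of_mod_eq hmod)
  have hb1 : 1 ≤ b := Nat.pos_of_ne_zero (by rintro rfl; omega)
  have key : (n - 1 - a) * m + (b - 1) * n + x + n + m = m * n := by
    zify [show a ≤ n - 1 by omega, show 1 ≤ n by omega, hb1, hlt.le] at hb ⊢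
    linear_combination -hb
  exact ⟨n - 1 - a, b - 1, by omega⟩

theorem mem_closure_pair_iff_sub_notMem {m n x : ℕ} (cop : Coprime m n) (hm : 1 < m)
    (hn : 1 < n) (hx : x ≤ m * n - m - n) :
    x ∈ AddSubmonoid.closure {m, n} ↔ m * n - m - n - x ∉ AddSubmonoid.closure {m, n} := by
  refine ⟨fun hxS hyS => ?_, not_imp_comm.1 (sub_mem_closure_pair_of_notMem cop (by omega))⟩
  apply (frobeniusNumber_pair cop hm hn).1
  simpa [Nat.sub_add_cancel hx] using add_mem hyS hxS

/-- For coprime `n, s` with `1 < n < s`, `S` the additive submonoid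
of `ℕ` generated by `n` and `s`, and `g = (n-1)(s-1)/2`: for every index
`i ≥ g + 1`, the `i`-th smallest element of `S` (1-indexed, so `Nat.nth (· ∈ S) (i-1)`
in 0-indexed form) equals `g - 1 + i`. -/
theorem nsCurve_nongaps_stabilize (n s g : ℕ) (h1 : 1 < n) (h2 : n < s)
    (hcop : Nat.Coprime n s) (hg : g = (n - 1) * (s - 1) / 2) :
    ∀ i : ℕ, g + 1 ≤ i →
      Nat.nth (fun k => k ∈ AddSubmonoid.closure ({n, s} : Set ℕ)) (i - 1) = g - 1 + i := by
  classical
  intro i hi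
  set p : ℕ → Prop := fun k => k ∈ AddSubmonoid.closure ({n, s} : Set ℕ)
  have hns : n + s ≤ n * s := add_le_mul h1 (by omega)
  have hgenus : (n - 1) * (s - 1) = n * s - n - s + 1 := by
    rw [Nat.sub_one_mul, Nat.mul_sub_one]
    omega
  have hsymm : 2 * count p (n * s - n - s + 1) = n * s - n - s + 1 :=
    two_mul_count_eq_of_iff_not_sub fun _ hx =>
      mem_closure_pair_iff_sub_notMem hcop h1 (by omega) hx
  have hgaps : ∀ k, n * s - n - s < k → p k :=
    (frobeniusNumber_iff.1 (frobeniusNumber_pair hcop h1 (by omega))).2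
  rw [nth_eq_add_of_count_add_eq hgaps (g := g) (by omega) (by omega)]
  omega
end
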